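/- Let $a = \sum_j a_j\,dx_j$ be a continuous 1-form on the closed unit disk $D^n \subset \mathbb{R}^n$ ($n > 1$), and define $J(x) = \sum_{j=1}^n x_j \int_0^1 a_j(tx)\,dt$. Then for any $q \ge 1$ and $r > qn$ there is a constant $C < \infty$, independent of $a$, such that $\|J\|_{L^q(D^n)} \le C \|a\|_{L^r(D^n)}$. -/

import Mathlib

/-!
Cauchy–Schwarz gives `|J x| ≤ ∫₀¹ ‖a (t x)‖ dt`, and Jensen raises this to the `q`-th power.
After exchanging the two integrals, the substitution `y = t x` turns the inner integral into
`t⁻ⁿ ∫_{B_t} ‖a‖^q`. Hölder on `B_t`, with `vol(B_t) = tⁿ vol(B₁)`, bounds this by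
`t^(-nq/r) vol(B₁)^(1-q/r) ‖a‖_r^q`, and `t^(-nq/r)` is integrable on `[0, 1]` because `r > qn`.
-/

open MeasureTheory Metric Set Module

section Holder

variable {α : Type*} [MeasurableSpace α] {μ : Measure α}

theorem integral_rpow_le_integral_rpow_rpow_mul_measureReal_univ [IsFiniteMeasure μ] {f : α → ℝ}
    (hf₀ : 0 ≤ᵐ[μ] f) {p r : ℝ} (hf : MemLp f (ENNReal.ofReal r) μ) (hp : 0 < p) (hpr : p ≤ r) :
    ∫ x, f x ^ p ∂μ ≤ (∫ x, f x ^ r ∂μ) ^ (p / r) * μ.real univ ^ (1 - p / r) := by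
  rcases hpr.eq_or_lt with rfl | hpr
  · simp [div_self hp.ne']
  have hr : 0 < r := hp.trans hpr
  have hconj : (r / p).HolderConjugate (1 - p / r)⁻¹ := by
    simpa using Real.HolderConjugate.inv_one_sub_inv (div_pos hp hr) ((div_lt_one hr).2 hpr)
  have hfp : MemLp (fun x => f x ^ p) (ENNReal.ofReal (r / p)) μ := by
    have := hf.norm_rpow_div (ENNReal.ofReal p)
    rw [ENNReal.toReal_ofReal hp.le, ← ENNReal.ofReal_div_of_pos hp] at this
    refine this.ae_eq ?_
    filter_upwards [hf₀] with x hx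
    rw [Real.norm_of_nonneg hx]
  have hpow : (fun x => (f x ^ p) ^ (r / p)) =ᵐ[μ] fun x => f x ^ r := by
    filter_upwards [hf₀] with x hx
    rw [← Real.rpow_mul hx, mul_div_cancel₀ _ hp.ne']
  have := integral_mul_le_Lp_mul_Lq_of_nonneg hconj (hf₀.mono fun x hx => Real.rpow_nonneg hx p)
    (ae_of_all _ fun _ => zero_le_one) hfp (memLp_const 1)
  simpa [integral_congr_ae hpow] using this

theorem rpow_integral_le_integral_rpow [IsProbabilityMeasure μ] {f : α → ℝ} (hf₀ : 0 ≤ᵐ[μ] f)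
    {q : ℝ} (hf : MemLp f (ENNReal.ofReal q) μ) (hq : 1 ≤ q) :
    (∫ x, f x ∂μ) ^ q ≤ ∫ x, f x ^ q ∂μ := by
  have := integral_rpow_le_integral_rpow_rpow_mul_measureReal_univ hf₀ hf zero_lt_one hq
  simp only [Real.rpow_one, probReal_univ, Real.one_rpow, mul_one] at this
  calc (∫ x, f x ∂μ) ^ q ≤ ((∫ x, f x ^ q ∂μ) ^ (1 / q)) ^ q := by
        gcongr
        exact integral_nonneg_of_ae hf₀
    _ = ∫ x, f x ^ q ∂μ := by
        rw [← Real.rpow_mul (integral_nonneg_of_ae (hf₀.mono fun x hx => Real.rpow_nonneg hx q)),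
          one_div_mul_cancel (by linarith), Real.rpow_one]

end Holder

theorem ContinuousOn.memLp_restrict_of_isCompact {X E : Type*} [TopologicalSpace X] [T2Space X]
    [MeasurableSpace X] [OpensMeasurableSpace X] [NormedAddCommGroup E]
    [SecondCountableTopologyEither X E] {μ : Measure X} [IsFiniteMeasureOnCompacts μ]
    {f : X → E} {s : Set X} (hf : ContinuousOn f s) (hs : IsCompact s) (p : ENNReal) :
    MemLp f p (μ.restrict s) := by
  have : IsFiniteMeasure (μ.restrict s) := isFiniteMeasure_restrict.2 hs.measure_lt_top.ne
  obtain ⟨C, hC⟩ := hs.exists_bound_of_continuousOn hf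
  exact .of_bound (hf.aestronglyMeasurable hs.measurableSet) C
    ((ae_restrict_iff' hs.measurableSet).2 (ae_of_all _ hC))

theorem smul_mem_closedBall_zero_one {E : Type*} [NormedAddCommGroup E] [NormedSpace ℝ E] {x : E}
    (hx : x ∈ closedBall (0 : E) 1) {t : ℝ} (ht : t ∈ Icc (0 : ℝ) 1) :
    t • x ∈ closedBall (0 : E) 1 :=
  (convex_closedBall 0 1).smul_mem_of_zero_mem (mem_closedBall_self zero_le_one) hx ht

section Ball

variable {E F : Type*} [NormedAddCommGroup E] [NormedSpace ℝ E] [FiniteDimensional ℝ E]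
  [MeasurableSpace E] [BorelSpace E] {μ : Measure E} [μ.IsAddHaarMeasure] [NormedAddCommGroup F]

variable (μ) in
theorem setIntegral_closedBall_comp_smul [NormedSpace ℝ F] (f : E → F) {t : ℝ} (ht : 0 < t) :
    ∫ x in closedBall 0 1, f (t • x) ∂μ = (t ^ finrank ℝ E)⁻¹ • ∫ y in closedBall 0 t, f y ∂μ := by
  rw [Measure.setIntegral_comp_smul_of_pos μ f _ ht, _root_.smul_closedBall _ _ zero_le_one,
    smul_zero, Real.norm_of_nonneg ht.le, mul_one]

theorem setIntegral_closedBall_comp_smul_rpow_le {f : E → F} (hf : ContinuousOn f (closedBall 0 1))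
    {q r : ℝ} (hq : 0 < q) (hqr : q ≤ r) {t : ℝ} (ht₀ : 0 < t) (ht₁ : t ≤ 1) :
    ∫ x in closedBall 0 1, ‖f (t • x)‖ ^ q ∂μ ≤
      t ^ (-(finrank ℝ E * q / r)) * μ.real (closedBall 0 1) ^ (1 - q / r) *
        (∫ x in closedBall 0 1, ‖f x‖ ^ r ∂μ) ^ (q / r) := by
  set d := finrank ℝ E
  have hr : 0 < r := hq.trans_le hqr
  have hsub : closedBall (0 : E) t ⊆ closedBall 0 1 := closedBall_subset_closedBall ht₁
  have hmono : ∫ y in closedBall 0 t, ‖f y‖ ^ r ∂μ ≤ ∫ y in closedBall 0 1, ‖f y‖ ^ r ∂μ :=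
    setIntegral_mono_set ((hf.norm.rpow_const fun _ _ => Or.inr hr.le).integrableOn_compact
      (isCompact_closedBall _ _)) (ae_of_all _ fun _ => by positivity) hsub.eventuallyLE
  have : IsFiniteMeasure (μ.restrict (closedBall 0 t)) :=
    isFiniteMeasure_restrict.2 measure_closedBall_lt_top.ne
  have hholder := integral_rpow_le_integral_rpow_rpow_mul_measureReal_univ
    (μ := μ.restrict (closedBall 0 t)) (ae_of_all _ fun y => norm_nonneg (f y))
    ((hf.mono hsub).norm.memLp_restrict_of_isCompact (isCompact_closedBall _ _) _) hq hqr
  rw [measureReal_restrict_apply_univ, Measure.addHaar_real_closedBall' μ _ ht₀.le] at hholder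
  calc ∫ x in closedBall 0 1, ‖f (t • x)‖ ^ q ∂μ
      = (t ^ d)⁻¹ * ∫ y in closedBall 0 t, ‖f y‖ ^ q ∂μ :=
        setIntegral_closedBall_comp_smul μ (fun y => ‖f y‖ ^ q) ht₀
    _ ≤ (t ^ d)⁻¹ * ((∫ y in closedBall 0 1, ‖f y‖ ^ r ∂μ) ^ (q / r) *
          (t ^ d * μ.real (closedBall 0 1)) ^ (1 - q / r)) := by
        gcongr
        exact hholder.trans (by gcongr)
    _ = _ := by
        have htd : (t ^ d)⁻¹ * (t ^ d) ^ (1 - q / r) = t ^ (-(d * q / r)) := by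
          rw [← Real.rpow_natCast, ← Real.rpow_neg_one, ← Real.rpow_mul ht₀.le,
            ← Real.rpow_mul ht₀.le, ← Real.rpow_add ht₀]
          congr 1
          field_simp
          ring
        rw [Real.mul_rpow (by positivity) measureReal_nonneg, ← htd]
        ring

theorem integrable_norm_comp_smul_rpow_prod {f : E → F} (hf : ContinuousOn f (closedBall 0 1))
    {q : ℝ} (hq : 0 ≤ q) :
    Integrable (fun p : E × ℝ => ‖f (p.2 • p.1)‖ ^ q)
      ((μ.restrict (closedBall 0 1)).prod (volume.restrict (Icc 0 1))) := by
  rw [Measure.prod_restrict]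
  refine ContinuousOn.integrableOn_compact ((isCompact_closedBall 0 1).prod isCompact_Icc) ?_
  refine (hf.comp (continuous_snd.smul continuous_fst).continuousOn ?_).norm.rpow_const
    fun _ _ => Or.inr hq
  exact fun p hp => smul_mem_closedBall_zero_one hp.1 hp.2

theorem setIntegral_closedBall_integral_rpow_le {f : E → F} (hf : ContinuousOn f (closedBall 0 1))
    {q r : ℝ} (hq : 0 < q) (hqr : q ≤ r) (hr : q * finrank ℝ E < r) :
    ∫ x in closedBall 0 1, (∫ t in Icc (0 : ℝ) 1, ‖f (t • x)‖ ^ q) ∂μ ≤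
      (∫ t in Icc (0 : ℝ) 1, t ^ (-(finrank ℝ E * q / r))) * μ.real (closedBall 0 1) ^ (1 - q / r) *
        (∫ x in closedBall 0 1, ‖f x‖ ^ r ∂μ) ^ (q / r) := by
  have hβ : -1 < -(finrank ℝ E * q / r) := by
    rw [neg_lt_neg_iff, div_lt_one (hq.trans_le hqr), mul_comm]
    exact hr
  rw [integral_integral_swap (integrable_norm_comp_smul_rpow_prod hf hq.le),
    integral_Icc_eq_integral_Ioc, integral_Icc_eq_integral_Ioc, ← integral_mul_const,
    ← integral_mul_const]
  refine integral_mono_of_nonneg (ae_of_all _ fun t => integral_nonneg fun x => by positivity)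
    (((intervalIntegral.intervalIntegrable_rpow' hβ).1.mul_const _).mul_const _)
    (ae_restrict_of_forall_mem measurableSet_Ioc fun t ht => ?_)
  exact setIntegral_closedBall_comp_smul_rpow_le hf hq hqr ht.1 ht.2

end Ball

theorem sum_mul_integral_apply_eq_inner {α ι : Type*} [MeasurableSpace α] [Fintype ι]
    {ν : Measure α} {g : α → EuclideanSpace ℝ ι} (hg : Integrable g ν) (x : EuclideanSpace ℝ ι) :
    ∑ j, x j * ∫ t, g t j ∂ν = inner ℝ x (∫ t, g t ∂ν) := by
  simp only [PiLp.inner_apply, RCLike.inner_apply, conj_trivial]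
  refine Finset.sum_congr rfl fun j _ => ?_
  rw [mul_comm]
  congr 1
  exact (EuclideanSpace.proj j).integral_comp_comm hg

theorem abs_sum_mul_integral_segment_rpow_le {n : ℕ}
    {a : EuclideanSpace ℝ (Fin n) → EuclideanSpace ℝ (Fin n)} (ha : ContinuousOn a (closedBall 0 1))
    {x : EuclideanSpace ℝ (Fin n)} (hx : x ∈ closedBall 0 1) {q : ℝ} (hq : 1 ≤ q) :
    |∑ j, x j * ∫ t in Icc (0 : ℝ) 1, a (t • x) j| ^ q ≤ ∫ t in Icc (0 : ℝ) 1, ‖a (t • x)‖ ^ q := by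
  have hc : ContinuousOn (fun t : ℝ => a (t • x)) (Icc 0 1) :=
    ha.comp (continuous_id.smul continuous_const).continuousOn
      fun t ht => smul_mem_closedBall_zero_one hx ht
  have : IsProbabilityMeasure (volume.restrict (Icc (0 : ℝ) 1)) := ⟨by simp⟩
  have hx₁ : ‖x‖ ≤ 1 := mem_closedBall_zero_iff.1 hx
  calc |∑ j, x j * ∫ t in Icc (0 : ℝ) 1, a (t • x) j| ^ q
      = |inner ℝ x (∫ t in Icc (0 : ℝ) 1, a (t • x))| ^ q := by
        rw [sum_mul_integral_apply_eq_inner (hc.integrableOn_compact isCompact_Icc)]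
    _ ≤ (∫ t in Icc (0 : ℝ) 1, ‖a (t • x)‖) ^ q := by
        gcongr
        calc |inner ℝ x (∫ t in Icc (0 : ℝ) 1, a (t • x))|
            ≤ ‖x‖ * ‖∫ t in Icc (0 : ℝ) 1, a (t • x)‖ := abs_real_inner_le_norm _ _
          _ ≤ ‖∫ t in Icc (0 : ℝ) 1, a (t • x)‖ := mul_le_of_le_one_left (norm_nonneg _) hx₁
          _ ≤ ∫ t in Icc (0 : ℝ) 1, ‖a (t • x)‖ := norm_integral_le_integral_norm _
    _ ≤ ∫ t in Icc (0 : ℝ) 1, ‖a (t • x)‖ ^ q :=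
        rpow_integral_le_integral_rpow (ae_of_all _ fun _ => norm_nonneg _)
          (hc.norm.memLp_restrict_of_isCompact isCompact_Icc _) hq

/-- Lemma 3 of the paper: for a continuous 1-form `a = ∑ aⱼ dxⱼ` on the closed
unit disk `Dⁿ ⊂ ℝⁿ` (`n > 1`), let `J(x) = ∑ⱼ xⱼ ∫_0^1 aⱼ(tx) dt` be the
integral of `a` along the segment from `0` to `x`.  Then for any `q ≥ 1` and
`r > qn` there is a constant `C`, independent of `a`, with
`‖J‖_{L^q(Dⁿ)} ≤ C ‖a‖_{L^r(Dⁿ)}`. -/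
theorem stmt6 (n : ℕ) (hn : 1 < n) (q r : ℝ) (hq : 1 ≤ q) (hr : q * n < r) :
    ∃ C : ℝ, ∀ a : EuclideanSpace ℝ (Fin n) → EuclideanSpace ℝ (Fin n),
      ContinuousOn a (Metric.closedBall (0 : EuclideanSpace ℝ (Fin n)) 1) →
      (∫ x in Metric.closedBall (0 : EuclideanSpace ℝ (Fin n)) 1,
          |∑ j : Fin n, x j * ∫ t in Set.Icc (0 : ℝ) 1, a (t • x) j| ^ q) ^ (1 / q)
        ≤ C * (∫ x in Metric.closedBall (0 : EuclideanSpace ℝ (Fin n)) 1,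
            ‖a x‖ ^ r) ^ (1 / r) := by
  have hq₀ : 0 < q := zero_lt_one.trans_le hq
  have hqr : q ≤ r := (le_mul_of_one_le_right hq₀.le (by exact_mod_cast hn.le)).trans hr.le
  set K := (∫ t in Icc (0 : ℝ) 1, t ^ (-(n * q / r))) *
    volume.real (closedBall (0 : EuclideanSpace ℝ (Fin n)) 1) ^ (1 - q / r)
  refine ⟨K ^ (1 / q), fun a ha => ?_⟩
  have hJ := integral_mono_of_nonneg (ae_of_all _ fun _ => by positivity)
    (integrable_norm_comp_smul_rpow_prod (μ := volume) ha hq₀.le).integral_prod_left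
    (ae_restrict_of_forall_mem measurableSet_closedBall
      fun x hx => abs_sum_mul_integral_segment_rpow_le ha hx hq)
  have hmain := setIntegral_closedBall_integral_rpow_le (μ := volume) ha hq₀ hqr
    (by rwa [finrank_euclideanSpace_fin])
  rw [finrank_euclideanSpace_fin] at hmain
  have hR : 0 ≤ ∫ x in closedBall (0 : EuclideanSpace ℝ (Fin n)) 1, ‖a x‖ ^ r :=
    integral_nonneg fun _ => by positivity
  have hK : 0 ≤ K := mul_nonneg
    (setIntegral_nonneg measurableSet_Icc fun t ht => Real.rpow_nonneg ht.1 _) (by positivity)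
  calc _ ≤ (K * (∫ x in closedBall (0 : EuclideanSpace ℝ (Fin n)) 1, ‖a x‖ ^ r) ^ (q / r))
        ^ (1 / q) := by
        gcongr
        exact hJ.trans hmain
    _ = _ := by
        rw [Real.mul_rpow hK (by positivity), ← Real.rpow_mul hR]
        congr 2
        field_simp
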